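/- Let n ≥ 2, 2 ≤ γ < n, 2 ≤ δ < n and a, b ≥ 0. Suppose u, v ∈ C¹(ℝⁿ) are nonnegative functions solving the integral system (IE) with parameters (γ, δ, a, b, p, q) where p = q = 1. Then u ≡ 0 and v ≡ 0 on ℝⁿ. -/

import Mathlib

open MeasureTheory Metric Set

/-- Spherical average of `w` over the sphere of radius `r` centered at the origin,
with respect to the `(n-1)`-dimensional (Hausdorff) surface measure. -/
noncomputable def sphAvg (n : ℕ) (w : EuclideanSpace ℝ (Fin n) → ℝ) (r : ℝ) : ℝ :=
  ⨍ x in sphere (0 : EuclideanSpace ℝ (Fin n)) r, w x ∂(μH[(n : ℝ) - 1])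
/-- The Riesz potential constant `R_{s,n}`. -/
noncomputable def Rconst (n : ℕ) (s : ℝ) : ℝ :=
  Real.Gamma (((n : ℝ) - s) / 2) / (Real.pi ^ ((n : ℝ) / 2) * 2 ^ s * Real.Gamma (s / 2))
/-- The integral system (IE) with parameters `(γ, δ, a, b, p, q)`:
`u(x) = R_{γ,n} ∫ |y|^a v(y)^p |x-y|^{γ-n} dy`,
`v(x) = R_{δ,n} ∫ |y|^b u(y)^q |x-y|^{δ-n} dy`, all integrals being finite. -/
def SolvesIE (n : ℕ) (γ δ a b p q : ℝ)
    (u v : EuclideanSpace ℝ (Fin n) → ℝ) : Prop :=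
  (∀ x, Integrable (fun y => ‖y‖ ^ a * v y ^ p * ‖x - y‖ ^ (γ - (n : ℝ)))) ∧
  (∀ x, Integrable (fun y => ‖y‖ ^ b * u y ^ q * ‖x - y‖ ^ (δ - (n : ℝ)))) ∧
  (∀ x, u x = Rconst n γ * ∫ y, ‖y‖ ^ a * v y ^ p * ‖x - y‖ ^ (γ - (n : ℝ))) ∧
  (∀ x, v x = Rconst n δ * ∫ y, ‖y‖ ^ b * u y ^ q * ‖x - y‖ ^ (δ - (n : ℝ)))

private lemma Rconst_pos {n : ℕ} {s : ℝ} (h0 : 0 < s) (h1 : s < n) : 0 < Rconst n s := by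
  unfold Rconst
  apply div_pos (Real.Gamma_pos_of_pos (by linarith))
  exact mul_pos (mul_pos (Real.rpow_pos_of_pos Real.pi_pos _) (Real.rpow_pos_of_pos two_pos _))
    (Real.Gamma_pos_of_pos (by linarith))

private lemma rpow_min_le' {A B t e : ℝ} (hA : 0 < A) (h1 : A ≤ t) (h2 : t ≤ B) :
    min (A ^ e) (B ^ e) ≤ t ^ e := by
  rcases le_or_gt 0 e with he | he
  · exact (min_le_left _ _).trans (Real.rpow_le_rpow hA.le h1 he)
  · exact (min_le_right _ _).trans (Real.rpow_le_rpow_of_nonpos (hA.trans_le h1) h2 he.le)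

private lemma ie_step {n : ℕ} (hn : 1 ≤ n) {K s t e c M : ℝ} (hK : 0 < K) (hs : 0 ≤ s)
    (ht : t ≤ n) (hc : 0 < c) (hM : 1 ≤ M)
    {f g : EuclideanSpace ℝ (Fin n) → ℝ} (hg0 : ∀ y, 0 ≤ g y)
    (hint : ∀ x, Integrable (fun y => ‖y‖ ^ s * g y * ‖x - y‖ ^ (t - (n : ℝ))))
    (heq : ∀ x, f x = K * ∫ y, ‖y‖ ^ s * g y * ‖x - y‖ ^ (t - (n : ℝ)))
    (hlow : ∀ y : EuclideanSpace ℝ (Fin n), M ≤ ‖y‖ → c * ‖y‖ ^ e ≤ g y) :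
    ∃ c' > 0, ∀ x : EuclideanSpace ℝ (Fin n), 4 * M ≤ ‖x‖ → c' * ‖x‖ ^ (s + e + t) ≤ f x := by
  haveI : Nonempty (Fin n) := ⟨⟨0, by omega⟩⟩
  haveI : Nontrivial (EuclideanSpace ℝ (Fin n)) := by
    refine nontrivial_of_ne (EuclideanSpace.single ⟨0, by omega⟩ (1 : ℝ)) 0 (fun h => ?_)
    have h2 : ‖EuclideanSpace.single (⟨0, by omega⟩ : Fin n) (1 : ℝ)‖ = 1 :=
      by rw [EuclideanSpace.norm_single]; norm_num
    rw [h, norm_zero] at h2; norm_num at h2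
  set B1 : ℝ := (volume (ball (0 : EuclideanSpace ℝ (Fin n)) 1)).toReal with hB1
  have hB1pos : 0 < B1 :=
    ENNReal.toReal_pos (measure_ball_pos _ _ one_pos).ne' measure_ball_lt_top.ne
  set m : ℝ := min ((3 / 4 : ℝ) ^ e) ((5 / 4 : ℝ) ^ e) with hm
  have hmpos : 0 < m := lt_min (Real.rpow_pos_of_pos (by norm_num) _)
    (Real.rpow_pos_of_pos (by norm_num) _)
  have hκpos : (0:ℝ) < (4⁻¹ : ℝ) ^ n - (8⁻¹ : ℝ) ^ n := by
    have := pow_lt_pow_left₀ (by norm_num : (8⁻¹:ℝ) < 4⁻¹) (by norm_num) (by omega : n ≠ 0)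
    linarith
  refine ⟨K * ((3 / 4 : ℝ) ^ s * (c * m) * ((4⁻¹ : ℝ) ^ (t - (n : ℝ))) *
    ((((4⁻¹ : ℝ) ^ n - (8⁻¹ : ℝ) ^ n) * B1))), by positivity, fun x hx => ?_⟩
  set r : ℝ := ‖x‖ with hr
  have hr4 : 4 ≤ r := le_trans (by linarith) hx
  have hr0 : 0 < r := by linarith
  set S : Set (EuclideanSpace ℝ (Fin n)) := closedBall x (r / 4) \ ball x (r / 8) with hS
  have hSmeas : MeasurableSet S := measurableSet_closedBall.diff measurableSet_ball
  have hvolS : (volume S).toReal = ((4⁻¹ : ℝ) ^ n - (8⁻¹ : ℝ) ^ n) * B1 * r ^ n := by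
    have hsub : ball x (r / 8) ⊆ closedBall x (r / 4) :=
      (ball_subset_closedBall).trans (closedBall_subset_closedBall (by linarith))
    have hdiff : volume S = volume (closedBall x (r / 4)) - volume (ball x (r / 8)) :=
      measure_diff hsub measurableSet_ball.nullMeasurableSet measure_ball_lt_top.ne
    rw [hdiff, Measure.addHaar_closedBall volume x (by positivity : (0:ℝ) ≤ r / 4),
      Measure.addHaar_ball volume x (by positivity : (0:ℝ) ≤ r / 8),
      finrank_euclideanSpace_fin,
      ENNReal.toReal_sub_of_le
        (by exact mul_le_mul_left (ENNReal.ofReal_le_ofReal (by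
          apply pow_le_pow_left₀ (by positivity); linarith)) _)
        (by exact ENNReal.mul_ne_top ENNReal.ofReal_ne_top measure_ball_lt_top.ne),
      ENNReal.toReal_mul, ENNReal.toReal_mul, ENNReal.toReal_ofReal (by positivity),
      ENNReal.toReal_ofReal (by positivity), ← hB1]
    have e1 : (r / 4 : ℝ) ^ n = 4⁻¹ ^ n * r ^ n := by rw [← mul_pow]; ring_nf
    have e2 : (r / 8 : ℝ) ^ n = 8⁻¹ ^ n * r ^ n := by rw [← mul_pow]; ring_nf
    rw [e1, e2]; ring
  have hvolSfin : volume S ≠ ⊤ :=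
    ((measure_mono (diff_subset)).trans_lt measure_closedBall_lt_top).ne
  set L : ℝ := ((3 / 4 : ℝ) * r) ^ s * (c * (m * r ^ e)) * ((4⁻¹ : ℝ) * r) ^ (t - (n : ℝ)) with hL
  have hbound : ∀ y ∈ S, L ≤ ‖y‖ ^ s * g y * ‖x - y‖ ^ (t - (n : ℝ)) := by
    intro y hy
    obtain ⟨hy1, hy2⟩ := hy
    rw [mem_closedBall, dist_comm, dist_eq_norm] at hy1
    rw [mem_ball, dist_comm, dist_eq_norm] at hy2
    push_neg at hy2
    have hnn := abs_norm_sub_norm_le x y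
    rw [abs_le] at hnn
    have hylb : (3 / 4 : ℝ) * r ≤ ‖y‖ := by linarith [hnn.2]
    have hyub : ‖y‖ ≤ (5 / 4 : ℝ) * r := by linarith [hnn.1]
    have hxy0 : 0 < ‖x - y‖ := by linarith
    have h1 : ((3 / 4 : ℝ) * r) ^ s ≤ ‖y‖ ^ s :=
      Real.rpow_le_rpow (by positivity) hylb hs
    have h2 : c * (m * r ^ e) ≤ g y := by
      have hMy : M ≤ ‖y‖ := by linarith
      refine le_trans ?_ (hlow y hMy)
      have hmin : min (((3 / 4 : ℝ) * r) ^ e) (((5 / 4 : ℝ) * r) ^ e) ≤ ‖y‖ ^ e :=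
        rpow_min_le' (by positivity) hylb hyub
      have hmr : m * r ^ e ≤ min (((3 / 4 : ℝ) * r) ^ e) (((5 / 4 : ℝ) * r) ^ e) := by
        refine le_min ?_ ?_
        · rw [Real.mul_rpow (by norm_num) hr0.le]
          exact mul_le_mul_of_nonneg_right (min_le_left _ _) (Real.rpow_nonneg hr0.le _)
        · rw [Real.mul_rpow (by norm_num) hr0.le]
          exact mul_le_mul_of_nonneg_right (min_le_right _ _) (Real.rpow_nonneg hr0.le _)
      exact mul_le_mul_of_nonneg_left (hmr.trans hmin) hc.le
    have h3 : ((4⁻¹ : ℝ) * r) ^ (t - (n : ℝ)) ≤ ‖x - y‖ ^ (t - (n : ℝ)) := by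
      apply Real.rpow_le_rpow_of_nonpos hxy0 (by linarith)
      have : (n : ℝ) ≥ 1 := by exact_mod_cast hn
      linarith
    calc L ≤ (‖y‖ ^ s * g y) * ((4⁻¹ : ℝ) * r) ^ (t - (n : ℝ)) := by
          apply mul_le_mul_of_nonneg_right _ (Real.rpow_nonneg (by positivity) _)
          exact mul_le_mul h1 h2 (by positivity) (Real.rpow_nonneg (norm_nonneg _) _)
      _ ≤ ‖y‖ ^ s * g y * ‖x - y‖ ^ (t - (n : ℝ)) :=
          mul_le_mul_of_nonneg_left h3 (mul_nonneg (Real.rpow_nonneg (norm_nonneg _) _) (hg0 y))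
  have hSint : L * (volume S).toReal ≤ ∫ y in S, ‖y‖ ^ s * g y * ‖x - y‖ ^ (t - (n : ℝ)) :=
    setIntegral_ge_of_const_le_real hSmeas hvolSfin hbound (hint x).integrableOn
  have htotal : (∫ y in S, ‖y‖ ^ s * g y * ‖x - y‖ ^ (t - (n : ℝ))) ≤
      ∫ y, ‖y‖ ^ s * g y * ‖x - y‖ ^ (t - (n : ℝ)) := by
    apply setIntegral_le_integral (hint x)
    filter_upwards with y
    exact mul_nonneg (mul_nonneg (Real.rpow_nonneg (norm_nonneg _) _) (hg0 y))
      (Real.rpow_nonneg (norm_nonneg _) _)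
  have hkey : K * ((3 / 4 : ℝ) ^ s * (c * m) * ((4⁻¹ : ℝ) ^ (t - (n : ℝ))) *
      ((((4⁻¹ : ℝ) ^ n - (8⁻¹ : ℝ) ^ n) * B1))) * r ^ (s + e + t)
      = K * (L * (volume S).toReal) := by
    rw [hvolS, hL]
    rw [Real.mul_rpow (by norm_num : (0:ℝ) ≤ (3/4:ℝ)) hr0.le,
      Real.mul_rpow (by norm_num : (0:ℝ) ≤ (4⁻¹:ℝ)) hr0.le]
    have hrexp : r ^ s * r ^ e * r ^ (t - (n : ℝ)) * r ^ n = r ^ (s + e + t) := by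
      rw [← Real.rpow_natCast r n, ← Real.rpow_add hr0, ← Real.rpow_add hr0,
        ← Real.rpow_add hr0]
      ring_nf
    calc K * ((3 / 4 : ℝ) ^ s * (c * m) * ((4⁻¹ : ℝ) ^ (t - (n : ℝ))) *
        ((((4⁻¹ : ℝ) ^ n - (8⁻¹ : ℝ) ^ n) * B1))) * r ^ (s + e + t)
        = K * ((3 / 4 : ℝ) ^ s * (c * m) * ((4⁻¹ : ℝ) ^ (t - (n : ℝ))) *
          ((((4⁻¹ : ℝ) ^ n - (8⁻¹ : ℝ) ^ n) * B1))) *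
          (r ^ s * r ^ e * r ^ (t - (n : ℝ)) * r ^ n) := by rw [hrexp]
      _ = K * ((3 / 4 : ℝ) ^ s * r ^ s * (c * (m * r ^ e)) *
          ((4⁻¹ : ℝ) ^ (t - (n : ℝ)) * r ^ (t - (n : ℝ))) *
          (((4⁻¹ : ℝ) ^ n - (8⁻¹ : ℝ) ^ n) * B1 * r ^ n)) := by ring
  rw [heq x, hkey]
  exact mul_le_mul_of_nonneg_left (hSint.trans htotal) hK.le

private lemma ie_base {n : ℕ} (hn : 1 ≤ n) {K s t : ℝ} (hK : 0 < K) (hs : 0 ≤ s) (ht : t ≤ n)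
    {f g : EuclideanSpace ℝ (Fin n) → ℝ} (hgC : Continuous g) (hg0 : ∀ y, 0 ≤ g y)
    (hint : ∀ x, Integrable (fun y => ‖y‖ ^ s * g y * ‖x - y‖ ^ (t - (n : ℝ))))
    (heq : ∀ x, f x = K * ∫ y, ‖y‖ ^ s * g y * ‖x - y‖ ^ (t - (n : ℝ)))
    {x₀ : EuclideanSpace ℝ (Fin n)} (hgx₀ : 0 < g x₀) :
    ∃ c > 0, ∃ M, 1 ≤ M ∧ ∀ x : EuclideanSpace ℝ (Fin n),
      M ≤ ‖x‖ → c * ‖x‖ ^ (t - (n : ℝ)) ≤ f x := by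
  have hev : ∀ᶠ y in nhds x₀, g x₀ / 2 < g y :=
    (hgC.tendsto x₀).eventually (eventually_gt_nhds (by linarith))
  obtain ⟨ε, hε, hball⟩ := Metric.eventually_nhds_iff.mp hev
  set i : Fin n := ⟨0, by omega⟩
  obtain ⟨x₁, hx₁ne, hx₁d⟩ :
      ∃ x₁ : EuclideanSpace ℝ (Fin n), x₁ ≠ 0 ∧ dist x₁ x₀ ≤ ε / 2 := by
    rcases eq_or_ne x₀ 0 with h0 | h0
    · refine ⟨EuclideanSpace.single i (ε / 2), ?_, ?_⟩
      · intro h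
        have h2 : ‖EuclideanSpace.single i (ε / 2)‖ = ε / 2 := by
          rw [EuclideanSpace.norm_single]; rw [Real.norm_eq_abs, abs_of_pos (by linarith)]
        rw [h, norm_zero] at h2; linarith
      · rw [h0, dist_zero_right, EuclideanSpace.norm_single, Real.norm_eq_abs,
          abs_of_pos (by linarith)]
    · exact ⟨x₀, h0, by simp; linarith⟩
  have hx₁pos : 0 < ‖x₁‖ := norm_pos_iff.mpr hx₁ne
  set ρ : ℝ := min (ε / 4) (‖x₁‖ / 2) with hρ
  have hρpos : 0 < ρ := lt_min (by linarith) (by linarith)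
  set ε₀ : ℝ := g x₀ / 2 with hε₀
  have hε₀pos : 0 < ε₀ := by positivity
  set S : Set (EuclideanSpace ℝ (Fin n)) := ball x₁ ρ with hS
  have hSfacts : ∀ y ∈ S, ε₀ < g y ∧ ‖x₁‖ / 2 ≤ ‖y‖ ∧ ‖y‖ ≤ 2 * ‖x₁‖ := by
    intro y hy
    rw [hS, mem_ball] at hy
    have hd : dist y x₀ < ε :=
      (dist_triangle y x₁ x₀).trans_lt (by
        have h1 : ρ ≤ ε / 4 := min_le_left _ _
        linarith)
    have hny := abs_norm_sub_norm_le y x₁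
    rw [abs_le] at hny
    have hd2 : ‖y - x₁‖ < ρ := by rwa [← dist_eq_norm]
    have h2 : ρ ≤ ‖x₁‖ / 2 := min_le_right _ _
    exact ⟨hball hd, by linarith [hny.1], by linarith [hny.2]⟩
  set Vol : ℝ := (volume S).toReal with hVol
  have hVolpos : 0 < Vol :=
    ENNReal.toReal_pos (measure_ball_pos _ _ hρpos).ne' measure_ball_lt_top.ne
  have hVolfin : volume S ≠ ⊤ := measure_ball_lt_top.ne
  refine ⟨K * ((‖x₁‖ / 2) ^ s * ε₀ * 2 ^ (t - (n : ℝ)) * Vol), by positivity,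
    max 1 (4 * ‖x₁‖), le_max_left _ _, fun x hx => ?_⟩
  have hx4 : 4 * ‖x₁‖ ≤ ‖x‖ := le_trans (le_max_right _ _) hx
  have hx1 : (1 : ℝ) ≤ ‖x‖ := le_trans (le_max_left _ _) hx
  set L : ℝ := (‖x₁‖ / 2) ^ s * ε₀ * (2 * ‖x‖) ^ (t - (n : ℝ)) with hL
  have hbound : ∀ y ∈ S, L ≤ ‖y‖ ^ s * g y * ‖x - y‖ ^ (t - (n : ℝ)) := by
    intro y hy
    obtain ⟨h1, h2, h3⟩ := hSfacts y hy
    have hxy1 : ‖x - y‖ ≤ 2 * ‖x‖ := (norm_sub_le x y).trans (by linarith)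
    have hxy0 : 0 < ‖x - y‖ := by
      have habs := abs_norm_sub_norm_le x y
      rw [abs_le] at habs
      have : ‖x‖ - ‖y‖ ≤ ‖x - y‖ := habs.2
      linarith
    have b1 : (‖x₁‖ / 2) ^ s ≤ ‖y‖ ^ s := Real.rpow_le_rpow (by positivity) h2 hs
    have b3 : (2 * ‖x‖) ^ (t - (n : ℝ)) ≤ ‖x - y‖ ^ (t - (n : ℝ)) := by
      apply Real.rpow_le_rpow_of_nonpos hxy0 hxy1
      have : (1:ℝ) ≤ (n : ℝ) := by exact_mod_cast hn
      linarith
    calc L ≤ (‖y‖ ^ s * g y) * (2 * ‖x‖) ^ (t - (n : ℝ)) := by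
          apply mul_le_mul_of_nonneg_right _ (Real.rpow_nonneg (by positivity) _)
          exact mul_le_mul b1 h1.le hε₀pos.le (Real.rpow_nonneg (norm_nonneg _) _)
      _ ≤ ‖y‖ ^ s * g y * ‖x - y‖ ^ (t - (n : ℝ)) :=
          mul_le_mul_of_nonneg_left b3 (mul_nonneg (Real.rpow_nonneg (norm_nonneg _) _) (hg0 y))
  have hSint : L * Vol ≤ ∫ y in S, ‖y‖ ^ s * g y * ‖x - y‖ ^ (t - (n : ℝ)) :=
    setIntegral_ge_of_const_le_real measurableSet_ball hVolfin hbound (hint x).integrableOn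
  have htotal : (∫ y in S, ‖y‖ ^ s * g y * ‖x - y‖ ^ (t - (n : ℝ))) ≤
      ∫ y, ‖y‖ ^ s * g y * ‖x - y‖ ^ (t - (n : ℝ)) := by
    apply setIntegral_le_integral (hint x)
    filter_upwards with y
    exact mul_nonneg (mul_nonneg (Real.rpow_nonneg (norm_nonneg _) _) (hg0 y))
      (Real.rpow_nonneg (norm_nonneg _) _)
  have hkey : K * ((‖x₁‖ / 2) ^ s * ε₀ * 2 ^ (t - (n : ℝ)) * Vol) * ‖x‖ ^ (t - (n : ℝ))
      = K * (L * Vol) := by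
    rw [hL, Real.mul_rpow (by norm_num : (0:ℝ) ≤ 2) (norm_nonneg x)]
    ring
  rw [heq x, hkey]
  exact mul_le_mul_of_nonneg_left (hSint.trans htotal) hK.le

/-- Theorem 1.3 (i) in integral form: for `p = q = 1`, the integral system (IE)
has no nontrivial nonnegative `C¹` solutions. -/
theorem IE_liouville_pq_one (n : ℕ) (hn : 2 ≤ n) (γ δ a b : ℝ)
    (hγ1 : 2 ≤ γ) (hγ2 : γ < n) (hδ1 : 2 ≤ δ) (hδ2 : δ < n)
    (ha : 0 ≤ a) (hb : 0 ≤ b)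
    (u v : EuclideanSpace ℝ (Fin n) → ℝ)
    (huC : ContDiff ℝ 1 u) (hvC : ContDiff ℝ 1 v)
    (hu0 : ∀ x, 0 ≤ u x) (hv0 : ∀ x, 0 ≤ v x)
    (hIE : SolvesIE n γ δ a b 1 1 u v) :
    (∀ x, u x = 0) ∧ (∀ x, v x = 0) := by
  obtain ⟨hi1, hi2, he1, he2⟩ := hIE
  simp only [Real.rpow_one] at hi1 hi2 he1 he2
  have hn1 : 1 ≤ n := by omega
  have hncast : (2:ℝ) ≤ (n:ℝ) := by exact_mod_cast hn
  have hKγ : 0 < Rconst n γ := Rconst_pos (by linarith) hγ2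
  have hKδ : 0 < Rconst n δ := Rconst_pos (by linarith) hδ2
  have hvzero : ∀ x, v x = 0 := by
    by_contra hcon
    push_neg at hcon
    obtain ⟨x₀, hx₀⟩ := hcon
    have hvx₀ : 0 < v x₀ := lt_of_le_of_ne (hv0 x₀) (Ne.symm hx₀)
    obtain ⟨c₀, hc₀, M₀, hM₀, hu_lb⟩ :=
      ie_base hn1 hKγ ha hγ2.le hvC.continuous hv0 hi1 he1 hvx₀
    have hind : ∀ k : ℕ, ∃ e : ℝ, (γ - n + 4 * k ≤ e) ∧ ∃ c > 0, ∃ M, 1 ≤ M ∧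
        ∀ x : EuclideanSpace ℝ (Fin n), M ≤ ‖x‖ → c * ‖x‖ ^ e ≤ u x := by
      intro k
      induction k with
      | zero => exact ⟨γ - n, by norm_num, c₀, hc₀, M₀, hM₀, hu_lb⟩
      | succ k ih =>
        obtain ⟨e, he, c, hc, M, hM, hu⟩ := ih
        obtain ⟨c₁, hc₁, hv_lb⟩ := ie_step hn1 hKδ hb hδ2.le hc hM hu0 hi2 he2 hu
        obtain ⟨c₂, hc₂, hu_lb2⟩ :=
          ie_step hn1 hKγ ha hγ2.le hc₁ (by linarith : (1:ℝ) ≤ 4 * M) hv0 hi1 he1 hv_lb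
        refine ⟨a + (b + e + δ) + γ, by push_cast; linarith, c₂, hc₂, 4 * (4 * M),
          by linarith, hu_lb2⟩
    obtain ⟨e, he, c, hc, M, hM, hu_lb'⟩ := hind n
    have hecast : (n:ℝ) - b - δ ≤ e := by
      have : (γ:ℝ) - n + 4 * n ≥ 2 + 3 * n := by push_cast; linarith
      push_cast at he ⊢
      linarith
    have hint0 := hi2 0
    have hsubset : {y : EuclideanSpace ℝ (Fin n) | M ≤ ‖y‖} ⊆
        {y : EuclideanSpace ℝ (Fin n) |
          c ≤ ‖y‖ ^ b * u y * ‖(0 : EuclideanSpace ℝ (Fin n)) - y‖ ^ (δ - (n : ℝ))} := by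
      intro y hy
      simp only [mem_setOf_eq] at hy ⊢
      rw [zero_sub, norm_neg]
      have hy1 : (1:ℝ) ≤ ‖y‖ := le_trans hM hy
      have hy0 : (0:ℝ) < ‖y‖ := by linarith
      have hone : (1:ℝ) ≤ ‖y‖ ^ (b + e + (δ - (n:ℝ))) :=
        Real.one_le_rpow hy1 (by linarith)
      have hprod : c * ‖y‖ ^ (b + e + (δ - (n:ℝ)))
          = ‖y‖ ^ b * (c * ‖y‖ ^ e) * ‖y‖ ^ (δ - (n:ℝ)) := by
        rw [Real.rpow_add hy0, Real.rpow_add hy0]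
        ring
      calc c = c * 1 := by ring
        _ ≤ c * ‖y‖ ^ (b + e + (δ - (n:ℝ))) := by
            exact mul_le_mul_of_nonneg_left hone hc.le
        _ = ‖y‖ ^ b * (c * ‖y‖ ^ e) * ‖y‖ ^ (δ - (n:ℝ)) := hprod
        _ ≤ ‖y‖ ^ b * u y * ‖y‖ ^ (δ - (n:ℝ)) := by
            apply mul_le_mul_of_nonneg_right _ (Real.rpow_nonneg (norm_nonneg _) _)
            exact mul_le_mul_of_nonneg_left (hu_lb' y hy) (Real.rpow_nonneg (norm_nonneg _) _)
    have hfin : volume {y : EuclideanSpace ℝ (Fin n) | M ≤ ‖y‖} < ⊤ :=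
      (measure_mono hsubset).trans_lt (hint0.measure_ge_lt_top hc)
    haveI : Nonempty (Fin n) := ⟨⟨0, by omega⟩⟩
    haveI : Nontrivial (EuclideanSpace ℝ (Fin n)) := by
      refine nontrivial_of_ne (EuclideanSpace.single ⟨0, by omega⟩ (1 : ℝ)) 0 (fun h => ?_)
      have h2 : ‖EuclideanSpace.single (⟨0, by omega⟩ : Fin n) (1 : ℝ)‖ = 1 :=
        by rw [EuclideanSpace.norm_single]; norm_num
      rw [h, norm_zero] at h2; norm_num at h2
    have hcompl : {y : EuclideanSpace ℝ (Fin n) | M ≤ ‖y‖}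
        = (ball (0 : EuclideanSpace ℝ (Fin n)) M)ᶜ := by
      ext y
      simp [mem_ball, dist_zero_right, not_lt]
    have huniv : volume (univ : Set (EuclideanSpace ℝ (Fin n))) = ⊤ :=
      measure_univ_of_isAddLeftInvariant volume
    have : volume {y : EuclideanSpace ℝ (Fin n) | M ≤ ‖y‖} = ⊤ := by
      rw [hcompl, measure_compl measurableSet_ball measure_ball_lt_top.ne, huniv]
      exact ENNReal.top_sub measure_ball_lt_top.ne
    rw [this] at hfin
    exact (lt_irrefl _ hfin)
  refine ⟨fun x => ?_, hvzero⟩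
  have : ∀ y : EuclideanSpace ℝ (Fin n),
      ‖y‖ ^ a * v y * ‖x - y‖ ^ (γ - (n : ℝ)) = 0 := by
    intro y; rw [hvzero y]; ring
  rw [he1 x]
  simp only [this, integral_zero, mul_zero]
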